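/- Let 0 < r₁ < r₂ < ∞ and let U be a solution of the Neumann problem on the annulus in polar coordinates: U ∈ C²((r₁,r₂)×ℝ) ∩ C¹([r₁,r₂]×ℝ), 2π-periodic in θ, satisfying U_rr + (1/r)U_r + (1/r²)U_θθ = 0 on (r₁,r₂)×ℝ, with U_r(r,θ) = φ(r,θ)/r on {r₁,r₂}×ℝ, where φ is continuous, 2π-periodic in θ. Then u(r,θ) = r·U_r(r,θ) is the solution of the Dirichlet problem for the polar Laplace equation on (r₁,r₂)×ℝ with boundary values u = φ on {r₁,r₂}×ℝ. -/

import Mathlib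

/-!
Put `z = log r + iθ` and `V z = U (exp (re z)) (im z)`. Then `ΔV = r² (U_rr + U_r / r + U_θθ / r²)`,
so `V` is harmonic on the strip `log r₁ < re z < log r₂`, hence `∂V/∂x - i ∂V/∂y` is holomorphic
there, and its real part `∂V/∂x = r U_r` is harmonic. Read back in polar coordinates, this says
that `u = r U_r` solves the polar Laplace equation. Holomorphy supplies the third derivatives of `U`
that a direct computation of the polar Laplacian of `r U_r` would need.
-/

noncomputable def pd1 (f : ℝ → ℝ → ℝ) (r θ : ℝ) : ℝ := deriv (fun s => f s θ) r
noncomputable def pd2 (f : ℝ → ℝ → ℝ) (r θ : ℝ) : ℝ := deriv (fun t => f r t) θ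

open Complex Filter InnerProductSpace Laplacian Set Topology

theorem iteratedFDeriv_two_eq_iteratedDeriv_comp_add_smul {𝕜 E F : Type*}
    [NontriviallyNormedField 𝕜] [NormedAddCommGroup E] [NormedSpace 𝕜 E]
    [NormedAddCommGroup F] [NormedSpace 𝕜 F] {f : E → F} {x : E} (hf : ContDiffAt 𝕜 2 f x)
    (v : E) :
    iteratedFDeriv 𝕜 2 f x (fun _ ↦ v) = iteratedDeriv 2 (fun s : 𝕜 ↦ f (x + s • v)) 0 := by
  have hderiv : deriv (fun s : 𝕜 ↦ x + s • v) = fun _ ↦ v := by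
    ext s; simpa using (((hasDerivAt_id s).smul_const v).const_add x).deriv
  have hderiv2 : iteratedDeriv 2 (fun s : 𝕜 ↦ x + s • v) 0 = 0 := by
    rw [iteratedDeriv_succ, iteratedDeriv_one, hderiv, deriv_const]
  have hchain := iteratedDeriv_vcomp_two (x := 0) (by simpa using hf)
    (by fun_prop : ContDiffAt 𝕜 2 (fun s : 𝕜 ↦ x + s • v) 0)
  rw [hderiv, hderiv2] at hchain
  simpa [Function.comp_def] using hchain.symm

noncomputable def polarLaplacian (U : ℝ → ℝ → ℝ) (r θ : ℝ) : ℝ :=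
  pd1 (pd1 U) r θ + (1 / r) * pd1 U r θ + (1 / r ^ 2) * pd2 (pd2 U) r θ

noncomputable def ofLogPolar (U : ℝ → ℝ → ℝ) (z : ℂ) : ℝ := U (Real.exp z.re) z.im

theorem contDiff_exp_re_im : ContDiff ℝ 2 (fun z : ℂ ↦ (Real.exp z.re, z.im)) :=
  (Real.contDiff_exp.comp reCLM.contDiff).prodMk imCLM.contDiff

theorem laplacian_ofLogPolar {U : ℝ → ℝ → ℝ} {z : ℂ}
    (hU : ContDiffAt ℝ 2 (fun p : ℝ × ℝ ↦ U p.1 p.2) (Real.exp z.re, z.im)) :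
    Δ (ofLogPolar U) z = Real.exp z.re ^ 2 * polarLaplacian U (Real.exp z.re) z.im := by
  have hV : ContDiffAt ℝ 2 (ofLogPolar U) z :=
    hU.comp (f := fun z : ℂ ↦ (Real.exp z.re, z.im)) z contDiff_exp_re_im.contDiffAt
  have hg : ContDiffAt ℝ 2 (fun s ↦ U s z.im) (Real.exp z.re) :=
    hU.comp (f := fun s ↦ (s, z.im)) _ (by fun_prop)
  have hrad : iteratedDeriv 2 (fun s : ℝ ↦ ofLogPolar U (z + s • 1)) 0 =
      Real.exp z.re ^ 2 * pd1 (pd1 U) (Real.exp z.re) z.im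
        + Real.exp z.re * pd1 U (Real.exp z.re) z.im := by
    have hline : (fun s : ℝ ↦ ofLogPolar U (z + s • 1))
        = fun s ↦ ((fun s ↦ U s z.im) ∘ Real.exp) (z.re + s) := by
      ext s; simp [ofLogPolar]
    simp only [hline, iteratedDeriv_comp_const_add, add_zero]
    rw [iteratedDeriv_scomp_two hg Real.contDiff_exp.contDiffAt]
    simp [iteratedDeriv_succ, pd1]
  have hang : iteratedDeriv 2 (fun s : ℝ ↦ ofLogPolar U (z + s • I)) 0 =
      pd2 (pd2 U) (Real.exp z.re) z.im := by
    have hline : (fun s : ℝ ↦ ofLogPolar U (z + s • I))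
        = fun s ↦ U (Real.exp z.re) (z.im + s) := by
      ext s; simp [ofLogPolar]
    simp only [hline, iteratedDeriv_comp_const_add, add_zero]
    simp [iteratedDeriv_succ, pd2]
  have hpair : ∀ v : ℂ, ![v, v] = fun _ ↦ v := fun v ↦ by ext i; fin_cases i <;> rfl
  simp only [laplacian_eq_iteratedFDeriv_complexPlane, hpair]
  rw [iteratedFDeriv_two_eq_iteratedDeriv_comp_add_smul hV,
    iteratedFDeriv_two_eq_iteratedDeriv_comp_add_smul hV, hrad, hang, polarLaplacian]
  field_simp

theorem harmonicAt_ofLogPolar {U : ℝ → ℝ → ℝ} {z : ℂ}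
    (hU : ∀ᶠ p in 𝓝 (Real.exp z.re, z.im),
      ContDiffAt ℝ 2 (fun p : ℝ × ℝ ↦ U p.1 p.2) p ∧ polarLaplacian U p.1 p.2 = 0) :
    HarmonicAt (ofLogPolar U) z := by
  have hU' := (contDiff_exp_re_im.continuous.tendsto z).eventually hU
  refine ⟨hU.self_of_nhds.1.comp (f := fun z : ℂ ↦ (Real.exp z.re, z.im)) z
    contDiff_exp_re_im.contDiffAt, ?_⟩
  filter_upwards [hU'] with w hw
  rw [laplacian_ofLogPolar hw.1, hw.2, mul_zero, Pi.zero_apply]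

theorem polarLaplacian_eq_zero_of_harmonicAt {U : ℝ → ℝ → ℝ} {r θ : ℝ} (hr : 0 < r)
    (h : HarmonicAt (ofLogPolar U) (Real.log r + θ * I)) : polarLaplacian U r θ = 0 := by
  set z : ℂ := Real.log r + θ * I
  have hre : Real.exp z.re = r := by simp [z, Real.exp_log hr]
  have him : z.im = θ := by simp [z]
  have hL : ContDiffAt ℝ 2 (fun p : ℝ × ℝ ↦ (Real.log p.1 : ℂ) + p.2 * I) (r, θ) := by
    have hlog : ContDiffAt ℝ 2 (fun p : ℝ × ℝ ↦ Real.log p.1) (r, θ) :=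
      (Real.contDiffAt_log.mpr hr.ne').comp (g := Real.log) _ contDiffAt_fst
    have hofReal : ContDiff ℝ 2 ((↑) : ℝ → ℂ) := ofRealCLM.contDiff
    fun_prop
  have hU : ContDiffAt ℝ 2 (fun p : ℝ × ℝ ↦ U p.1 p.2) (r, θ) := by
    refine (h.1.comp (r, θ) hL).congr_of_eventuallyEq ?_
    filter_upwards [(isOpen_lt continuous_const continuous_fst).mem_nhds hr] with p hp
    simp [ofLogPolar, Real.exp_log hp]
  have hΔ := laplacian_ofLogPolar (z := z) (by rwa [hre, him])
  rw [h.2.self_of_nhds, hre, him, Pi.zero_apply, eq_comm] at hΔ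
  exact (mul_eq_zero.mp hΔ).resolve_left (pow_ne_zero 2 hr.ne')

theorem fderiv_ofLogPolar_one {U : ℝ → ℝ → ℝ} {z : ℂ}
    (hU : DifferentiableAt ℝ (fun p : ℝ × ℝ ↦ U p.1 p.2) (Real.exp z.re, z.im)) :
    fderiv ℝ (ofLogPolar U) z 1 = Real.exp z.re * pd1 U (Real.exp z.re) z.im := by
  have hV : DifferentiableAt ℝ (ofLogPolar U) z :=
    hU.comp (f := fun z : ℂ ↦ (Real.exp z.re, z.im)) z
      (contDiff_exp_re_im.differentiable two_ne_zero _)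
  have hg : DifferentiableAt ℝ (fun s ↦ U s z.im) (Real.exp z.re) :=
    hU.comp (f := fun s ↦ (s, z.im)) _ (by fun_prop)
  have hline : (fun s : ℝ ↦ ofLogPolar U (z + s • 1))
      = fun s ↦ ((fun s ↦ U s z.im) ∘ Real.exp) (z.re + s) := by
    ext s; simp [ofLogPolar]
  have hlineDeriv := DifferentiableAt.deriv_comp_add_smul (x := z) (t := (0 : ℝ)) (y := (1 : ℂ))
    (by simpa using hV)
  rw [zero_smul, add_zero] at hlineDeriv
  rw [← hlineDeriv, hline, deriv_comp_const_add, add_zero,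
    deriv_comp _ hg Real.differentiable_exp.differentiableAt, Real.deriv_exp, mul_comm]
  rfl

theorem polarLaplacian_mul_pd1_eq_zero {s : Set (ℝ × ℝ)} (hs : IsOpen s)
    (hpos : ∀ p ∈ s, 0 < p.1) {U u : ℝ → ℝ → ℝ} (hU : ContDiffOn ℝ 2 (fun p : ℝ × ℝ ↦ U p.1 p.2) s)
    (hlap : ∀ p ∈ s, polarLaplacian U p.1 p.2 = 0)
    (hu : ∀ p ∈ s, u p.1 p.2 = p.1 * pd1 U p.1 p.2) {p : ℝ × ℝ} (hp : p ∈ s) :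
    polarLaplacian u p.1 p.2 = 0 := by
  set S : Set ℂ := (fun z : ℂ ↦ (Real.exp z.re, z.im)) ⁻¹' s
  have hS : IsOpen S := hs.preimage contDiff_exp_re_im.continuous
  have hV : ∀ z ∈ S, HarmonicAt (ofLogPolar U) z := fun z hz ↦ harmonicAt_ofLogPolar <| by
    filter_upwards [hs.mem_nhds hz] with q hq using ⟨hU.contDiffAt (hs.mem_nhds hq), hlap q hq⟩
  set z : ℂ := Real.log p.1 + p.2 * I
  have hz : z ∈ S := by simpa [S, z, Real.exp_log (hpos p hp)] using hp
  refine polarLaplacian_eq_zero_of_harmonicAt (hpos p hp) ?_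
  refine (harmonicAt_congr_nhds ?_).mpr
    (HarmonicAt.analyticAt_complex_partial (hV z hz)).harmonicAt_re
  filter_upwards [hS.mem_nhds hz] with w hw
  have hdiff := (hU.contDiffAt (hs.mem_nhds hw)).differentiableAt two_ne_zero
  rw [ofLogPolar, hu _ hw, ← fderiv_ofLogPolar_one hdiff]
  simp

theorem stmt5_general (r₁ r₂ : ℝ) (h1 : 0 < r₁) (h2 : r₁ < r₂)
    (φ : ℝ → ℝ → ℝ)
    (U Ur : ℝ → ℝ → ℝ)
    (hUper : ∀ r θ : ℝ, U r (θ + 2 * Real.pi) = U r θ)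
    (hC2 : ContDiffOn ℝ 2 (fun p : ℝ × ℝ => U p.1 p.2) (Set.Ioo r₁ r₂ ×ˢ (Set.univ : Set ℝ)))
    (hUr : ∀ r ∈ Set.Icc r₁ r₂, ∀ θ : ℝ,
      HasDerivWithinAt (fun s => U s θ) (Ur r θ) (Set.Icc r₁ r₂) r)
    (hC1 : ContinuousOn (fun p : ℝ × ℝ => (U p.1 p.2, Ur p.1 p.2, pd2 U p.1 p.2))
        (Set.Icc r₁ r₂ ×ˢ (Set.univ : Set ℝ)))
    (hlap : ∀ r θ : ℝ, r ∈ Set.Ioo r₁ r₂ →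
      pd1 (pd1 U) r θ + (1 / r) * pd1 U r θ + (1 / r ^ 2) * pd2 (pd2 U) r θ = 0)
    (hb1 : ∀ θ : ℝ, Ur r₁ θ = φ r₁ θ / r₁)
    (hb2 : ∀ θ : ℝ, Ur r₂ θ = φ r₂ θ / r₂)
    (u : ℝ → ℝ → ℝ)
    (hu : ∀ r θ : ℝ, u r θ = r * Ur r θ) :
    (∀ r ∈ Set.Icc r₁ r₂, ∀ θ : ℝ, u r (θ + 2 * Real.pi) = u r θ) ∧
    ContinuousOn (fun p : ℝ × ℝ => u p.1 p.2) (Set.Icc r₁ r₂ ×ˢ (Set.univ : Set ℝ)) ∧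
    (∀ r θ : ℝ, r ∈ Set.Ioo r₁ r₂ →
      pd1 (pd1 u) r θ + (1 / r) * pd1 u r θ + (1 / r ^ 2) * pd2 (pd2 u) r θ = 0) ∧
    (∀ θ : ℝ, u r₁ θ = φ r₁ θ) ∧ (∀ θ : ℝ, u r₂ θ = φ r₂ θ) := by
  have hUr_eq : ∀ r ∈ Ioo r₁ r₂, ∀ θ, Ur r θ = pd1 U r θ := fun r hr θ ↦
    (((hUr r (Ioo_subset_Icc_self hr) θ).hasDerivAt (Icc_mem_nhds hr.1 hr.2)).deriv).symm
  refine ⟨fun r hr θ ↦ ?_, ?_, fun r θ hr ↦ ?_, fun θ ↦ ?_, fun θ ↦ ?_⟩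
  · have hper := hUr r hr (θ + 2 * Real.pi)
    simp only [hUper] at hper
    rw [hu, hu, (uniqueDiffOn_Icc h2 r hr).eq_deriv _ hper (hUr r hr θ)]
  · have hUrc : ContinuousOn (fun p : ℝ × ℝ ↦ Ur p.1 p.2) (Icc r₁ r₂ ×ˢ univ) :=
      (continuous_fst.comp continuous_snd).comp_continuousOn hC1
    exact (continuous_fst.continuousOn.mul hUrc).congr fun p _ ↦ hu p.1 p.2
  · exact polarLaplacian_mul_pd1_eq_zero (isOpen_Ioo.prod isOpen_univ)
      (fun p hp ↦ h1.trans hp.1.1) hC2 (fun p hp ↦ hlap p.1 p.2 hp.1)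
      (fun p hp ↦ by rw [hu, hUr_eq _ hp.1]) (p := (r, θ)) ⟨hr, trivial⟩
  · rw [hu, hb1, mul_div_cancel₀ _ h1.ne']
  · rw [hu, hb2, mul_div_cancel₀ _ (h1.trans h2).ne']

theorem stmt5 (r₁ r₂ : ℝ) (h1 : 0 < r₁) (h2 : r₁ < r₂)
    (φ : ℝ → ℝ → ℝ)
    (hφc1 : Continuous (fun θ => φ r₁ θ)) (hφc2 : Continuous (fun θ => φ r₂ θ))
    (hφper : ∀ r θ : ℝ, φ r (θ + 2 * Real.pi) = φ r θ)
    (U Ur : ℝ → ℝ → ℝ)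
    (hUper : ∀ r θ : ℝ, U r (θ + 2 * Real.pi) = U r θ)
    (hC2 : ContDiffOn ℝ 2 (fun p : ℝ × ℝ => U p.1 p.2) (Set.Ioo r₁ r₂ ×ˢ (Set.univ : Set ℝ)))
    (hUr : ∀ r ∈ Set.Icc r₁ r₂, ∀ θ : ℝ,
      HasDerivWithinAt (fun s => U s θ) (Ur r θ) (Set.Icc r₁ r₂) r)
    (hC1 : ContinuousOn (fun p : ℝ × ℝ => (U p.1 p.2, Ur p.1 p.2, pd2 U p.1 p.2))
        (Set.Icc r₁ r₂ ×ˢ (Set.univ : Set ℝ)))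
    (hlap : ∀ r θ : ℝ, r ∈ Set.Ioo r₁ r₂ →
      pd1 (pd1 U) r θ + (1 / r) * pd1 U r θ + (1 / r ^ 2) * pd2 (pd2 U) r θ = 0)
    (hb1 : ∀ θ : ℝ, Ur r₁ θ = φ r₁ θ / r₁)
    (hb2 : ∀ θ : ℝ, Ur r₂ θ = φ r₂ θ / r₂)
    (u : ℝ → ℝ → ℝ)
    (hu : ∀ r θ : ℝ, u r θ = r * Ur r θ) :
    (∀ r ∈ Set.Icc r₁ r₂, ∀ θ : ℝ, u r (θ + 2 * Real.pi) = u r θ) ∧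
    ContinuousOn (fun p : ℝ × ℝ => u p.1 p.2) (Set.Icc r₁ r₂ ×ˢ (Set.univ : Set ℝ)) ∧
    (∀ r θ : ℝ, r ∈ Set.Ioo r₁ r₂ →
      pd1 (pd1 u) r θ + (1 / r) * pd1 u r θ + (1 / r ^ 2) * pd2 (pd2 u) r θ = 0) ∧
    (∀ θ : ℝ, u r₁ θ = φ r₁ θ) ∧ (∀ θ : ℝ, u r₂ θ = φ r₂ θ) :=
  stmt5_general r₁ r₂ h1 h2 φ U Ur hUper hC2 hUr hC1 hlap hb1 hb2 u hu
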